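/- arXiv:1802.10163 — 2 statements merged into one kernel-verified Lean document; each statement's English description precedes it below -/
import Mathlib

section
/- Let G = (V,E) be a directed mixed graph and let ν be an inducing path from α to β in G. Then for every C ⊆ V∖{α}: if α ≠ β there exists a μ-connecting path from α to β given C, and if α = β there exists a μ-connecting cycle from α to β given C. Moreover, if ν is bidirected or directed, then the μ-connecting path or cycle can be chosen endpoint-identical to ν. -/
/-!
Directed mixed graphs (DMGs) with μ-separation, following
Mogensen & Hansen, "Markov equivalence of marginalized local independence graphs".
-/

universe u

/-- A directed mixed graph on node set `V`: a set of directed edges (`dir a b`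
meaning `a → b`) and a set of bidirected edges (`bi`, a symmetric relation since
bidirected edges are unordered pairs).  Loops are allowed. -/
structure DMG (V : Type u) where
  dir : V → V → Prop
  bi : V → V → Prop
  bi_symm : ∀ a b, bi a b → bi b a

namespace DMG

variable {V : Type u}

/-- A single step of a walk: an edge instance together with the direction in
which it is traversed (this records, in particular, orientations of loops).
A directed edge has a tail at its source and a head at its target; a bidirected
edge has heads at both endpoints. -/
inductive Step (G : DMG V) : V → V → Type u
  | dirF : ∀ {a b : V}, G.dir a b → Step G a b
  | dirB : ∀ {a b : V}, G.dir b a → Step G a b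
  | bid  : ∀ {a b : V}, G.bi a b → Step G a b

/-- Whether the step has a head (edge mark) at its start node. -/
def Step.headStart {G : DMG V} : ∀ {a b : V}, Step G a b → Bool
  | _, _, .dirF _ => false
  | _, _, .dirB _ => true
  | _, _, .bid _ => true

/-- Whether the step has a head (edge mark) at its end node. -/
def Step.headEnd {G : DMG V} : ∀ {a b : V}, Step G a b → Bool
  | _, _, .dirF _ => true
  | _, _, .dirB _ => false
  | _, _, .bid _ => true

/-- The step traverses a bidirected edge. -/
def Step.IsBid {G : DMG V} {a b : V} : Step G a b → Prop
  | .bid _ => True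
  | _ => False

/-- The step traverses a directed edge, forwards. -/
def Step.IsDirF {G : DMG V} {a b : V} : Step G a b → Prop
  | .dirF _ => True
  | _ => False

/-- The underlying edge of a step: a directed edge is the ordered pair
(tail, head); a bidirected edge is the unordered pair of its endpoints. -/
def Step.edge {G : DMG V} : ∀ {a b : V}, Step G a b → (V × V) ⊕ (Sym2 V)
  | a, b, .dirF _ => Sum.inl (a, b)
  | a, b, .dirB _ => Sum.inl (b, a)
  | a, b, .bid _ => Sum.inr s(a, b)

/-- A walk in a DMG: an alternating sequence of nodes and edges, each edge
between its neighbouring nodes, with a chosen orientation of each edge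
(in particular of each directed loop). -/
inductive Walk (G : DMG V) : V → V → Type u
  | nil (a : V) : Walk G a a
  | cons {a b c : V} (s : Step G a b) (w : Walk G b c) : Walk G a c

namespace Walk

variable {G : DMG V}

/-- A nontrivial walk contains at least one edge. -/
def Nontrivial : ∀ {a b : V}, Walk G a b → Prop
  | _, _, .nil _ => False
  | _, _, .cons _ _ => True

/-- The list of nodes of a walk, in order (with multiplicity). -/
def nodes : ∀ {a b : V}, Walk G a b → List V
  | a, _, .nil _ => [a]
  | a, _, .cons _ w => a :: w.nodes

/-- The non-endpoint (internal) nodes of a walk, in order (with multiplicity). -/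
def interior {a b : V} (w : Walk G a b) : List V :=
  (w.nodes.dropLast).drop 1

/-- The list of edges of a walk. -/
def edges : ∀ {a b : V}, Walk G a b → List ((V × V) ⊕ (Sym2 V))
  | _, _, .nil _ => []
  | _, _, .cons s w => s.edge :: w.edges

/-- Whether the first edge of the walk has a head at the first node
(`false` for a trivial walk). -/
def firstHead : ∀ {a b : V}, Walk G a b → Bool
  | _, _, .nil _ => false
  | _, _, .cons s _ => s.headStart

/-- Whether the last edge of the walk has a head at the last node
(`false` for a trivial walk). -/
def lastHead : ∀ {a b : V}, Walk G a b → Bool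
  | _, _, .nil _ => false
  | _, _, .cons s (.nil _) => s.headEnd
  | _, _, .cons _ (.cons t w) => lastHead (Walk.cons t w)

/-- Helper: conditions at all remaining internal node instances of a walk,
where `h` records whether the edge arriving at the current start node has a
head there.  A node instance is a collider if both adjoining edges have a
head at it; a collider must lie in `Anc`, a noncollider must avoid `C`. -/
def openFrom (C Anc : Set V) : ∀ {a b : V}, Bool → Walk G a b → Prop
  | _, _, _, .nil _ => True
  | a, _, h, .cons s w =>
      (if h && s.headStart then a ∈ Anc else a ∉ C) ∧ openFrom C Anc s.headEnd w

/-- Helper: every remaining internal node instance which is a collider lies in `S`. -/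
def collInFrom (S : Set V) : ∀ {a b : V}, Bool → Walk G a b → Prop
  | _, _, _, .nil _ => True
  | a, _, h, .cons s w =>
      ((h && s.headStart) = true → a ∈ S) ∧ collInFrom S s.headEnd w

/-- Every collider (internal node instance with heads on both sides) of the
walk lies in `S`. -/
def CollidersIn (S : Set V) : ∀ {a b : V}, Walk G a b → Prop
  | _, _, .nil _ => True
  | _, _, .cons s w => collInFrom S s.headEnd w

/-- The walk has no colliders. -/
def NoColliders {a b : V} (w : Walk G a b) : Prop :=
  w.CollidersIn ∅

/-- Helper: every remaining internal node instance is a collider. -/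
def allCollFrom : ∀ {a b : V}, Bool → Walk G a b → Prop
  | _, _, _, .nil _ => True
  | _, _, h, .cons s w => (h && s.headStart) = true ∧ allCollFrom s.headEnd w

/-- Every internal node instance of the walk is a collider (no noncolliders). -/
def AllColliders : ∀ {a b : V}, Walk G a b → Prop
  | _, _, .nil _ => True
  | _, _, .cons s w => allCollFrom s.headEnd w

/-- Every edge of the walk is bidirected. -/
def AllBid : ∀ {a b : V}, Walk G a b → Prop
  | _, _, .nil _ => True
  | _, _, .cons s w => s.IsBid ∧ w.AllBid

/-- The walk consists of a directed first edge (pointing forwards) followed by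
bidirected edges only (the form `α → β` or `α → γ₁ ↔ ⋯ ↔ γₙ ↔ β`). -/
def UniForm : ∀ {a b : V}, Walk G a b → Prop
  | _, _, .nil _ => False
  | _, _, .cons s w => s.IsDirF ∧ w.AllBid

end Walk

/-- `a` is an ancestor of `b`: there is a (possibly trivial) directed path
from `a` to `b`. -/
def anc (G : DMG V) (a b : V) : Prop := Relation.ReflTransGen G.dir a b

/-- The set of ancestors of nodes of `C`. -/
def anSet (G : DMG V) (C : Set V) : Set V := {a | ∃ c ∈ C, G.anc a c}

/-- The walk is μ-connecting given `C`: it is nontrivial, its first node is not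
in `C`, every collider lies in `An(C)`, no noncollider lies in `C`, and its
final edge has a head at the final node. -/
def Walk.MuConn {G : DMG V} (C : Set V) : ∀ {a b : V}, Walk G a b → Prop
  | _, _, .nil _ => False
  | a, _, .cons s w =>
      a ∉ C ∧ Walk.openFrom C (G.anSet C) s.headEnd w ∧ (Walk.cons s w).lastHead = true

/-- `B` is μ-separated from `A` given `C` in `G`: there is no μ-connecting
walk from any node of `A` to any node of `B` given `C`. -/
def muSep (G : DMG V) (A B C : Set V) : Prop :=
  ∀ ⦃a b : V⦄, a ∈ A → b ∈ B → ∀ w : Walk G a b, ¬ w.MuConn C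

/-- Two DMGs on the same node set are Markov equivalent: they induce the same
independence model via μ-separation, i.e. `I(G₁) = I(G₂)`. -/
def MarkovEq (G₁ G₂ : DMG V) : Prop :=
  ∀ A B C : Set V, muSep G₁ A B C ↔ muSep G₂ A B C

/-- `b` is separable from `a` in `I(G)`: there is `C ⊆ V ∖ {a}` with
`⟨{a},{b} | C⟩ ∈ I(G)`. -/
def separable (G : DMG V) (a b : V) : Prop :=
  ∃ C : Set V, a ∉ C ∧ muSep G {a} {b} C

/-- `a ∈ u(b, I(G))`: `b` is inseparable from `a` in `I(G)`. -/
def inU (G : DMG V) (a b : V) : Prop := ¬ G.separable a b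

/-- `G₁` is a subgraph of `G₂` (same node set, edge-set inclusion). -/
def Sub (G₁ G₂ : DMG V) : Prop :=
  (∀ a b, G₁.dir a b → G₂.dir a b) ∧ (∀ a b, G₁.bi a b → G₂.bi a b)

/-- The DMG obtained by adding the directed edge `a → b`. -/
def addDir (G : DMG V) (a b : V) : DMG V where
  dir x y := G.dir x y ∨ (x = a ∧ y = b)
  bi := G.bi
  bi_symm := G.bi_symm

/-- The DMG obtained by adding the bidirected edge `a ↔ b`. -/
def addBi (G : DMG V) (a b : V) : DMG V where
  dir := G.dir
  bi x y := G.bi x y ∨ (x = a ∧ y = b) ∨ (x = b ∧ y = a)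
  bi_symm x y h := by
    rcases h with h | h | h
    · exact Or.inl (G.bi_symm _ _ h)
    · exact Or.inr (Or.inr ⟨h.2, h.1⟩)
    · exact Or.inr (Or.inl ⟨h.2, h.1⟩)

/-- The DMG obtained by removing the directed edge `a → b`. -/
def removeDir (G : DMG V) (a b : V) : DMG V where
  dir x y := G.dir x y ∧ ¬(x = a ∧ y = b)
  bi := G.bi
  bi_symm := G.bi_symm

/-- The DMG obtained by removing the bidirected edge `a ↔ b`. -/
def removeBi (G : DMG V) (a b : V) : DMG V where
  dir := G.dir
  bi x y := G.bi x y ∧ ¬((x = a ∧ y = b) ∨ (x = b ∧ y = a))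
  bi_symm x y h := ⟨G.bi_symm _ _ h.1, fun hc => h.2 (by tauto)⟩

/-- The complete DMG: all directed and all bidirected edges present. -/
def IsComplete (G : DMG V) : Prop :=
  (∀ a b, G.dir a b) ∧ (∀ a b, G.bi a b)

/-- A DMG is maximal if it is complete, or adding any (absent) edge changes the
induced independence model. -/
def IsMaximal (G : DMG V) : Prop :=
  G.IsComplete ∨
    ∀ a b : V, (¬ G.dir a b → ¬ MarkovEq (G.addDir a b) G) ∧
      (¬ G.bi a b → ¬ MarkovEq (G.addBi a b) G)

end DMG
namespace DMG

variable {V : Type u}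

/-- An inducing path from `a` to `b`: a nontrivial path or cycle from `a` to
`b` with a head at `b`, with no noncolliders, and on which every node is an
ancestor of `a` or of `b`. -/
def IsInducingPath (G : DMG V) {a b : V} (w : Walk G a b) : Prop :=
  w.Nontrivial ∧
  (w.nodes.Nodup ∨ (a = b ∧ w.nodes.dropLast.Nodup)) ∧
  w.lastHead = true ∧
  w.AllColliders ∧
  ∀ x ∈ w.nodes, G.anc x a ∨ G.anc x b

/-- A bidirected inducing path: an inducing path all of whose edges are bidirected. -/
def IsBidirectedIP (G : DMG V) {a b : V} (w : Walk G a b) : Prop :=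
  G.IsInducingPath w ∧ w.AllBid

/-- A directed inducing path: an inducing path of the form `α → β` or
`α → γ₁ ↔ ⋯ ↔ γₙ ↔ β` with every `γᵢ` an ancestor of `β`. -/
def IsDirectedIP (G : DMG V) {a b : V} (w : Walk G a b) : Prop :=
  G.IsInducingPath w ∧ w.UniForm ∧ ∀ x ∈ w.interior, G.anc x b

/-- There exists a nontrivial walk in `G` between `x` and `y` with no
colliders, all non-endpoint nodes in `M`, and with edge marks `hs` at `x`
(`true` = head) and `he` at `y`. -/
def ConnThrough (G : DMG V) (M : Set V) (x y : V) (hs he : Bool) : Prop :=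
  ∃ w : Walk G x y, w.Nontrivial ∧ w.NoColliders ∧
    (∀ z ∈ w.interior, z ∈ M) ∧ w.firstHead = hs ∧ w.lastHead = he

/-- The latent projection `m(G, O)` of `G` on `O`: the DMG on node set `O`
having an edge (with given endpoint marks) between `α` and `β` if and only if
`G` contains a nontrivial endpoint-identical walk between `α` and `β` with no
colliders and all non-endpoint nodes in `M = V ∖ O`. -/
def latentProj (G : DMG V) (O : Set V) : DMG {x : V // x ∈ O} where
  dir x y := ConnThrough G Oᶜ x.1 y.1 false true
  bi x y := ConnThrough G Oᶜ x.1 y.1 true true ∨ ConnThrough G Oᶜ y.1 x.1 true true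
  bi_symm x y h := h.symm

/-- `x` is directedly collider-connected to `b`: there is a nontrivial walk
from `x` to `b` with a head at `b` on which every non-endpoint node is a
collider. -/
def dirCollConn (G : DMG V) (x b : V) : Prop :=
  ∃ w : Walk G x b, w.Nontrivial ∧ w.AllColliders ∧ w.lastHead = true

/-- The set `D(a,b)` of nodes in `An({a,b})` directedly collider-connected to
`b`, except `a`. -/
def Dset (G : DMG V) (a b : V) : Set V :=
  {x | x ∈ G.anSet {a, b} ∧ G.dirCollConn x b} \ {a}

/-- `a` and `b` are potential siblings in the independence model `I(G)`. -/
def PotSib (G : DMG V) (a b : V) : Prop :=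
  (G.inU b a ∧ G.inU a b) ∧
  (∀ (γ : V) (C : Set V), b ∈ C → muSep G {γ} {a} C → muSep G {γ} {b} C) ∧
  (∀ (γ : V) (C : Set V), a ∈ C → muSep G {γ} {b} C → muSep G {γ} {a} C)

/-- `a` is a potential parent of `b` in the independence model `I(G)`. -/
def PotPar (G : DMG V) (a b : V) : Prop :=
  G.inU a b ∧
  (∀ (γ : V) (C : Set V), a ∉ C → muSep G {γ} {b} C → muSep G {γ} {a} C) ∧
  (∀ (γ δ : V) (C : Set V), a ∉ C → b ∈ C →
    muSep G {γ} {δ} C → muSep G {γ} {b} C ∨ muSep G {a} {δ} C) ∧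
  (∀ (γ : V) (C : Set V), a ∉ C → muSep G {b} {γ} C → muSep G {b} {γ} (C ∪ {a}))

/-- The graph `N(I(G))`: directed edge `a → b` present iff `a` is a potential
parent of `b` in `I(G)`, bidirected edge `a ↔ b` present iff `a` and `b` are
potential siblings in `I(G)` (potential siblinghood is symmetric). -/
def NGraph (G : DMG V) : DMG V where
  dir a b := G.PotPar a b
  bi a b := G.PotSib a b ∨ G.PotSib b a
  bi_symm _ _ h := h.symm

/-- A path is m-connecting given `C` if it is a path (no repeated nodes), no
noncollider on it is in `C` and every collider on it is in `An(C)`. -/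
def Walk.MConn {G : DMG V} (C : Set V) : ∀ {a b : V}, Walk G a b → Prop
  | _, _, .nil _ => True
  | _, _, .cons s w =>
      (Walk.cons s w).nodes.Nodup ∧ Walk.openFrom C (G.anSet C) s.headEnd w

/-- `A` and `B` are m-separated by `C`: there is no m-connecting path between
a node of `A` and a node of `B` given `C`. -/
def mSep (G : DMG V) (A B C : Set V) : Prop :=
  ∀ ⦃a b : V⦄, a ∈ A → b ∈ B →
    (∀ w : Walk G a b, ¬ w.MConn C) ∧ (∀ w : Walk G b a, ¬ w.MConn C)

/-- Auxiliary directed-edge relation of the `B`-history version of `G`. -/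
def histDir (G : DMG V) (B : Set V) : (V ⊕ {x : V // x ∈ B}) → (V ⊕ {x : V // x ∈ B}) → Prop
  | .inl u, .inl v => G.dir u v
  | .inl u, .inr v => G.dir u v.1
  | _, _ => False

/-- Auxiliary bidirected-edge relation of the `B`-history version of `G`. -/
def histBi (G : DMG V) (B : Set V) : (V ⊕ {x : V // x ∈ B}) → (V ⊕ {x : V // x ∈ B}) → Prop
  | .inl u, .inl v => G.bi u v
  | .inl u, .inr v => G.bi u v.1
  | .inr u, .inl v => G.bi u.1 v
  | .inr _, .inr _ => False

/-- The `B`-history version `G(B)` of `G`: node set `V ⊔ Bᵖ`, whose subgraph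
on `V` is `G`, with additionally `α ↔ βᵖ` whenever `α ↔ β` in `G` and
`α → βᵖ` whenever `α → β` in `G` (for `α ∈ V`, `β ∈ B`). -/
def hist (G : DMG V) (B : Set V) : DMG (V ⊕ {x : V // x ∈ B}) where
  dir := G.histDir B
  bi := G.histBi B
  bi_symm x y h := by
    cases x <;> cases y <;>
      simp only [histBi] at h ⊢ <;>
      first
        | exact G.bi_symm _ _ h
        | exact h

end DMG

/-!
Call an interior node of `ν` blocked if it is not in `An(C)`. Unblocked nodes may stay colliders.
A blocked node `x` is an ancestor of `a` or `b`, and a directed path from `x` to the first of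
`a`, `b` that it meets avoids `An(C)`, since its nodes are descendants of `x`. Pick an open stretch
`y ∼ ⋯ ∼ z` of `ν` whose ends are either `a` and `b` themselves or blocked nodes, with `y` leading
to `a` and `z` leading to `b`; such a stretch exists because `ν` starts at `a` and ends at `b`.
Then `a ← ⋯ ← y ∼ ⋯ ∼ z → ⋯ → b` is μ-connecting, and a path or cycle unless the two directed
paths meet; in that case their last meeting point `u` gives `a ← ⋯ ← u → ⋯ → b` instead.

The first mark is a head unless `y = a`, which settles bidirected `ν` (a head at `a`). For
directed `ν` every blocked node is an ancestor of `b`: either its directed path to `b` passes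
through `a`, which gives the directed path `a → ⋯ → b`, or it leads to `b`, and then taking
`y = a` keeps the tail at `a`.
-/

namespace DMG

variable {V : Type u} {G : DMG V} {a b c d x y z : V} {A C S T : Set V}

def Step.reverse : ∀ {a b : V}, Step G a b → Step G b a
  | _, _, .dirF h => .dirB h
  | _, _, .dirB h => .dirF h
  | _, _, .bid h => .bid (G.bi_symm _ _ h)

@[simp] lemma Step.headStart_reverse (s : Step G a b) :
    s.reverse.headStart = s.headEnd := by
  cases s <;> rfl

@[simp] lemma Step.headEnd_reverse (s : Step G a b) :
    s.reverse.headEnd = s.headStart := by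
  cases s <;> rfl

lemma Step.IsDirF.headStart {s : Step G a b} (hs : s.IsDirF) : s.headStart = false := by
  cases s with
  | dirF => rfl
  | dirB | bid => exact hs.elim

lemma Step.IsDirF.headEnd {s : Step G a b} (hs : s.IsDirF) : s.headEnd = true := by
  cases s with
  | dirF => rfl
  | dirB | bid => exact hs.elim

lemma Step.IsDirF.dir {s : Step G a b} (hs : s.IsDirF) : G.dir a b := by
  cases s with
  | dirF h => exact h
  | dirB | bid => exact hs.elim

lemma subset_anSet (C : Set V) : C ⊆ G.anSet C :=
  fun c hc => ⟨c, hc, Relation.ReflTransGen.refl⟩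

lemma mem_anSet_of_anc (h : G.anc x y) (hy : y ∈ G.anSet C) :
    x ∈ G.anSet C := by
  obtain ⟨c, hc, hyc⟩ := hy
  exact ⟨c, hc, h.trans hyc⟩

namespace Walk

def append : ∀ {a b c : V}, Walk G a b → Walk G b c → Walk G a c
  | _, _, _, .nil _, w₂ => w₂
  | _, _, _, .cons s w, w₂ => .cons s (w.append w₂)

def reverse : ∀ {a b : V}, Walk G a b → Walk G b a
  | _, _, .nil a => .nil a
  | _, _, .cons s w => w.reverse.append (.cons s.reverse (.nil _))

def IsDirected : ∀ {a b : V}, Walk G a b → Prop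
  | _, _, .nil _ => True
  | _, _, .cons s w => s.IsDirF ∧ w.IsDirected

def lastHeadD (h : Bool) : ∀ {a b : V}, Walk G a b → Bool
  | _, _, .nil _ => h
  | _, _, .cons s w => (Walk.cons s w).lastHead

@[simp] lemma nil_append (w : Walk G a b) : (nil a).append w = w := rfl

@[simp] lemma cons_append (s : Step G a b) (w : Walk G b c) (w' : Walk G c d) :
    (cons s w).append w' = cons s (w.append w') := rfl

@[simp] lemma append_nil (w : Walk G a b) : w.append (nil b) = w := by
  induction w with
  | nil => rfl
  | cons s w ih => rw [cons_append, ih]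

lemma append_assoc (w₁ : Walk G a b) (w₂ : Walk G b c) (w₃ : Walk G c d) :
    (w₁.append w₂).append w₃ = w₁.append (w₂.append w₃) := by
  induction w₁ with
  | nil => rfl
  | cons s w ih => rw [cons_append, cons_append, ih]; rfl

@[simp] lemma nodes_nil : (nil a : Walk G a a).nodes = [a] := rfl

@[simp] lemma nodes_cons (s : Step G a b) (w : Walk G b c) :
    (cons s w).nodes = a :: w.nodes := rfl

lemma nodes_eq_cons_tail (w : Walk G a b) : w.nodes = a :: w.nodes.tail := by
  cases w <;> rfl

lemma nodes_ne_nil (w : Walk G a b) : w.nodes ≠ [] := by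
  rw [nodes_eq_cons_tail]; exact List.cons_ne_nil _ _

lemma nodes_eq_dropLast_append (w : Walk G a b) : w.nodes = w.nodes.dropLast ++ [b] := by
  induction w with
  | nil => rfl
  | cons s w ih =>
    rw [nodes_cons, List.dropLast_cons_of_ne_nil (nodes_ne_nil w), List.cons_append, ← ih]

lemma dropLast_nodes_cons (s : Step G a b) (w : Walk G b c) :
    (cons s w).nodes.dropLast = a :: w.nodes.dropLast :=
  List.dropLast_cons_of_ne_nil (nodes_ne_nil w)

lemma nodes_append (w₁ : Walk G a b) (w₂ : Walk G b c) :
    (w₁.append w₂).nodes = w₁.nodes.dropLast ++ w₂.nodes := by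
  induction w₁ with
  | nil => rfl
  | cons s w ih => rw [cons_append, nodes_cons, ih, dropLast_nodes_cons, List.cons_append]

lemma dropLast_nodes_append (w₁ : Walk G a b) (w₂ : Walk G b c) :
    (w₁.append w₂).nodes.dropLast = w₁.nodes.dropLast ++ w₂.nodes.dropLast := by
  rw [nodes_append, List.dropLast_append_of_ne_nil (nodes_ne_nil w₂)]

@[simp] lemma nodes_reverse (w : Walk G a b) : w.reverse.nodes = w.nodes.reverse := by
  induction w with
  | nil => rfl
  | cons s w ih =>
    obtain ⟨l, hl⟩ : ∃ l, w.nodes = _ :: l := ⟨_, nodes_eq_cons_tail w⟩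
    simp [reverse, nodes_append, ih, hl]

@[simp] lemma nontrivial_cons (s : Step G a b) (w : Walk G b c) : (cons s w).Nontrivial :=
  trivial

lemma Nontrivial.append_left {w₁ : Walk G a b} (h : w₁.Nontrivial) (w₂ : Walk G b c) :
    (w₁.append w₂).Nontrivial := by
  cases w₁ with
  | nil => exact h.elim
  | cons => trivial

lemma Nontrivial.append_right (w₁ : Walk G a b) {w₂ : Walk G b c} (h : w₂.Nontrivial) :
    (w₁.append w₂).Nontrivial := by
  cases w₁ with
  | nil => exact h
  | cons => trivial

lemma nontrivial_of_ne (w : Walk G a b) (hab : a ≠ b) : w.Nontrivial := by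
  cases w with
  | nil => exact hab rfl
  | cons => trivial

lemma Nontrivial.reverse {w : Walk G a b} (h : w.Nontrivial) : w.reverse.Nontrivial := by
  cases w with
  | nil => exact h.elim
  | cons s w => exact Nontrivial.append_right _ trivial

lemma nontrivial_of_lastHead {w : Walk G a b} (h : w.lastHead = true) : w.Nontrivial := by
  cases w with
  | nil => exact Bool.false_ne_true h
  | cons => trivial

lemma lastHead_cons_of_nontrivial (s : Step G a b) {w : Walk G b c} (h : w.Nontrivial) :
    (cons s w).lastHead = w.lastHead := by
  cases w with
  | nil => exact h.elim
  | cons => rfl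

lemma firstHead_append_of_nontrivial {w₁ : Walk G a b} (h : w₁.Nontrivial) (w₂ : Walk G b c) :
    (w₁.append w₂).firstHead = w₁.firstHead := by
  cases w₁ with
  | nil => exact h.elim
  | cons => rfl

lemma lastHead_append_of_nontrivial (w₁ : Walk G a b) {w₂ : Walk G b c} (h : w₂.Nontrivial) :
    (w₁.append w₂).lastHead = w₂.lastHead := by
  induction w₁ with
  | nil => rfl
  | cons s w ih => rw [cons_append, lastHead_cons_of_nontrivial s (h.append_right w), ih h]

lemma firstHead_reverse (w : Walk G a b) : w.reverse.firstHead = w.lastHead := by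
  induction w with
  | nil => rfl
  | cons s w ih =>
    cases w with
    | nil => exact Step.headStart_reverse s
    | cons t w' =>
      rw [reverse, firstHead_append_of_nontrivial (nontrivial_cons t w').reverse, ih,
        lastHead_cons_of_nontrivial s (nontrivial_cons t w')]

lemma lastHeadD_cons (s : Step G a b) (w : Walk G b c) :
    w.lastHeadD s.headEnd = (cons s w).lastHead := by
  cases w <;> rfl

lemma interior_cons (s : Step G a b) (w : Walk G b c) :
    (cons s w).interior = w.nodes.dropLast := by
  rw [interior, dropLast_nodes_cons]; rfl

lemma mem_nodes_of_mem_interior {w : Walk G a b} (hx : x ∈ w.interior) :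
    x ∈ w.nodes :=
  List.dropLast_subset _ (List.mem_of_mem_drop hx)

lemma dropLast_nodes_eq_cons_interior {w : Walk G a b} (h : w.Nontrivial) :
    w.nodes.dropLast = a :: w.interior := by
  cases w with
  | nil => exact h.elim
  | cons s w => rw [interior_cons, dropLast_nodes_cons]

lemma nodes_eq_cons_interior {w : Walk G a b} (h : w.Nontrivial) :
    w.nodes = a :: (w.interior ++ [b]) := by
  rw [nodes_eq_dropLast_append, dropLast_nodes_eq_cons_interior h, List.cons_append]

lemma interior_append {w₁ : Walk G a b} (h : w₁.Nontrivial) (w₂ : Walk G b c) :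
    (w₁.append w₂).interior = w₁.interior ++ w₂.nodes.dropLast := by
  cases w₁ with
  | nil => exact h.elim
  | cons s w => rw [cons_append, interior_cons, interior_cons, dropLast_nodes_append]

lemma interior_append_of_nontrivial_right (w₁ : Walk G a b) {w₂ : Walk G b c}
    (h : w₂.Nontrivial) : (w₁.append w₂).interior = w₁.nodes.tail ++ w₂.interior := by
  cases w₁ with
  | nil => rfl
  | cons s w =>
    rw [cons_append, interior_cons, dropLast_nodes_append, dropLast_nodes_eq_cons_interior h,
      nodes_cons, List.tail_cons, nodes_eq_dropLast_append w, List.dropLast_concat,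
      List.append_assoc, List.singleton_append]

lemma reverse_cons_append (s : Step G a b) (w : Walk G b c) (w' : Walk G a d) :
    (cons s w).reverse.append w' = w.reverse.append (cons s.reverse w') := by
  rw [reverse, append_assoc]; rfl

lemma openFrom_append (w₁ : Walk G a b) (w₂ : Walk G b c) (h : Bool) :
    openFrom C A h (w₁.append w₂) ↔ openFrom C A h w₁ ∧ openFrom C A (w₁.lastHeadD h) w₂ := by
  induction w₁ generalizing h with
  | nil => simp [openFrom, lastHeadD]
  | cons s w ih =>
    show _ ∧ _ ↔ (_ ∧ _) ∧ openFrom C A (cons s w).lastHead w₂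
    rw [ih, ← lastHeadD_cons, and_assoc]

lemma allCollFrom_append (w₁ : Walk G a b) (w₂ : Walk G b c) (h : Bool) :
    allCollFrom h (w₁.append w₂) ↔ allCollFrom h w₁ ∧ allCollFrom (w₁.lastHeadD h) w₂ := by
  induction w₁ generalizing h with
  | nil => simp [allCollFrom, lastHeadD]
  | cons s w ih =>
    show _ ∧ _ ↔ (_ ∧ _) ∧ allCollFrom (cons s w).lastHead w₂
    rw [ih, ← lastHeadD_cons, and_assoc]

lemma allColliders_append {w₁ : Walk G a b} {w₂ : Walk G b c} (h₁ : w₁.Nontrivial)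
    (h₂ : w₂.Nontrivial) : (w₁.append w₂).AllColliders ↔
      w₁.AllColliders ∧ w₁.lastHead = true ∧ w₂.firstHead = true ∧ w₂.AllColliders := by
  cases w₁ with
  | nil => exact h₁.elim
  | cons s w₁ =>
    cases w₂ with
    | nil => exact h₂.elim
    | cons t w₂ =>
      simp only [cons_append, AllColliders, allCollFrom_append, allCollFrom, lastHeadD_cons,
        Bool.and_eq_true, firstHead]
      tauto

lemma isDirected_append {w₁ : Walk G a b} {w₂ : Walk G b c} :
    (w₁.append w₂).IsDirected ↔ w₁.IsDirected ∧ w₂.IsDirected := by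
  induction w₁ with
  | nil => simp [IsDirected]
  | cons s w ih => simp only [cons_append, IsDirected, ih, and_assoc]

lemma IsDirected.firstHead {w : Walk G a b} (hw : w.IsDirected) : w.firstHead = false := by
  cases w with
  | nil => rfl
  | cons s w => exact hw.1.headStart

lemma IsDirected.lastHead {w : Walk G a b} (hw : w.IsDirected) (hn : w.Nontrivial) :
    w.lastHead = true := by
  induction w with
  | nil => exact hn.elim
  | cons s w ih =>
    cases w with
    | nil => exact hw.1.headEnd
    | cons t w => rw [lastHead_cons_of_nontrivial s (nontrivial_cons t w)]; exact ih hw.2 trivial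

lemma IsDirected.anc_of_mem {w : Walk G a b} (hw : w.IsDirected) {n : V} (hn : n ∈ w.nodes) :
    G.anc a n := by
  induction w with
  | nil => rw [List.mem_singleton.1 hn]; exact Relation.ReflTransGen.refl
  | cons s w ih =>
    rcases List.mem_cons.1 hn with rfl | hn
    · exact Relation.ReflTransGen.refl
    · exact Relation.ReflTransGen.head hw.1.dir (ih hw.2 hn)

lemma IsDirected.openFrom {w : Walk G a b} (hw : w.IsDirected)
    (hC : ∀ n ∈ w.nodes.dropLast, n ∉ C) (h : Bool) : Walk.openFrom C A h w := by
  induction w generalizing h with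
  | nil => trivial
  | cons s w ih =>
    rw [dropLast_nodes_cons] at hC
    refine ⟨?_, ih hw.2 (fun n hn => hC n (List.mem_cons_of_mem _ hn)) _⟩
    rw [hw.1.headStart, Bool.and_false, if_neg Bool.false_ne_true]
    exact hC _ List.mem_cons_self

/-- All nodes of `q`, the junction `b` included, are noncolliders of `q.reverse.append w`. -/
lemma IsDirected.openFrom_reverse_append {q : Walk G b a} (hq : q.IsDirected)
    (hC : ∀ n ∈ q.nodes.tail, n ∉ C) (w : Walk G b c) :
    Walk.openFrom C A false (q.reverse.append w) ↔ Walk.openFrom C A false w := by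
  induction q with
  | nil => rfl
  | cons s q ih =>
    rw [reverse_cons_append, ih hq.2 (fun n hn => hC n (List.mem_of_mem_tail hn))]
    show (_ ∧ _) ↔ _
    rw [Step.headEnd_reverse, hq.1.headStart, Bool.false_and, if_neg Bool.false_ne_true,
      and_iff_right]
    exact hC _ (by rw [nodes_cons, List.tail_cons, nodes_eq_cons_tail]; exact List.mem_cons_self)

lemma openFrom_of_allCollFrom {w : Walk G a b} {h : Bool} (hw : allCollFrom h w)
    (hA : ∀ x ∈ w.nodes.dropLast, x ∈ A) : openFrom C A h w := by
  induction w generalizing h with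
  | nil => trivial
  | cons s w ih =>
    rw [dropLast_nodes_cons] at hA
    exact ⟨by rw [if_pos hw.1]; exact hA _ List.mem_cons_self,
      ih hw.2 (fun x hx => hA x (List.mem_cons_of_mem _ hx))⟩

lemma AllColliders.openFrom {w : Walk G a b} (hw : w.AllColliders) (ha : a ∉ C)
    (hA : ∀ x ∈ w.interior, x ∈ A) : Walk.openFrom C A false w := by
  cases w with
  | nil => trivial
  | cons s w =>
    rw [interior_cons] at hA
    exact ⟨by rw [Bool.false_and, if_neg Bool.false_ne_true]; exact ha,
      openFrom_of_allCollFrom hw hA⟩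

lemma muConn_iff {w : Walk G a b} :
    w.MuConn C ↔ openFrom C (G.anSet C) false w ∧ w.lastHead = true := by
  cases w with
  | nil => simp [MuConn, lastHead]
  | cons s w =>
    simp only [MuConn, openFrom, Bool.false_and, Bool.false_eq_true, if_false]
    tauto

lemma IsDirected.muConn {w : Walk G a b} (hw : w.IsDirected) (hn : w.Nontrivial)
    (hC : ∀ n ∈ w.nodes.dropLast, n ∉ C) : w.MuConn C :=
  muConn_iff.2 ⟨hw.openFrom hC false, hw.lastHead hn⟩

lemma AllBid.firstHead {w : Walk G a b} (hw : w.AllBid) (hn : w.Nontrivial) :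
    w.firstHead = true := by
  cases w with
  | nil => exact hn.elim
  | cons s w =>
    cases s with
    | bid => rfl
    | dirF | dirB => exact hw.1.elim

lemma UniForm.firstHead {w : Walk G a b} (hw : w.UniForm) : w.firstHead = false := by
  cases w with
  | nil => exact hw.elim
  | cons s w => exact hw.1.headStart

def IsPathOrCycle (w : Walk G a b) : Prop :=
  w.interior.Nodup ∧ a ∉ w.interior ∧ b ∉ w.interior

lemma isPathOrCycle_of_nodup {w : Walk G a b} (h : w.nodes.Nodup) : w.IsPathOrCycle := by
  cases w with
  | nil => exact ⟨List.nodup_nil, List.not_mem_nil, List.not_mem_nil⟩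
  | cons s w =>
    rw [nodes_eq_cons_interior (nontrivial_cons s w), List.nodup_cons, List.nodup_append] at h
    simp only [List.mem_append, List.mem_singleton, not_or] at h
    exact ⟨h.2.1, fun ha => h.1.1 ha, fun hb => h.2.2.2 b hb b rfl rfl⟩

lemma isPathOrCycle_of_nodup_dropLast {w : Walk G a a} (h : w.nodes.dropLast.Nodup) :
    w.IsPathOrCycle := by
  cases w with
  | nil => exact ⟨List.nodup_nil, List.not_mem_nil, List.not_mem_nil⟩
  | cons s w =>
    rw [dropLast_nodes_eq_cons_interior (nontrivial_cons s w), List.nodup_cons] at h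
    exact ⟨h.2, h.1, h.1⟩

lemma IsPathOrCycle.nodup {w : Walk G a b} (hw : w.IsPathOrCycle) (hn : w.Nontrivial)
    (hab : a ≠ b) : w.nodes.Nodup := by
  rw [nodes_eq_cons_interior hn, List.nodup_cons, List.nodup_append]
  simp only [List.mem_append, List.mem_singleton, not_or]
  exact ⟨⟨hw.2.1, hab⟩, hw.1, List.nodup_singleton b, fun x hx _ hy hxy => by
    subst hy hxy; exact hw.2.2 hx⟩

lemma IsPathOrCycle.nodup_dropLast {w : Walk G a b} (hw : w.IsPathOrCycle)
    (hn : w.Nontrivial) : w.nodes.dropLast.Nodup := by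
  rw [dropLast_nodes_eq_cons_interior hn, List.nodup_cons]
  exact ⟨hw.2.1, hw.1⟩

structure IsDirPathAvoiding (S : Set V) (w : Walk G a b) : Prop where
  isDirected : w.IsDirected
  nodup : w.nodes.Nodup
  not_mem : ∀ n ∈ w.nodes.dropLast, n ∉ S

lemma isDirPathAvoiding_nil (S : Set V) : (nil a : Walk G a a).IsDirPathAvoiding S :=
  ⟨trivial, List.nodup_singleton a, by simp⟩

lemma IsDirPathAvoiding.cons {w : Walk G b c} (hw : w.IsDirPathAvoiding S)
    (h : G.dir a b) (haw : a ∉ w.nodes) (haS : a ∉ S) :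
    (cons (.dirF h) w).IsDirPathAvoiding S :=
  ⟨⟨trivial, hw.isDirected⟩, List.nodup_cons.2 ⟨haw, hw.nodup⟩, by
    rw [dropLast_nodes_cons]; exact List.forall_mem_cons.2 ⟨haS, hw.not_mem⟩⟩

lemma IsDirPathAvoiding.of_append_right {w₁ : Walk G a b} {w₂ : Walk G b c}
    (h : (w₁.append w₂).IsDirPathAvoiding S) : w₂.IsDirPathAvoiding S :=
  ⟨(isDirected_append.1 h.isDirected).2,
    h.nodup.sublist (nodes_append w₁ w₂ ▸ List.sublist_append_right _ _),
    fun n hn => h.not_mem n (dropLast_nodes_append w₁ w₂ ▸ List.mem_append_right _ hn)⟩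

lemma IsDirPathAvoiding.mono {w : Walk G a b} (h : w.IsDirPathAvoiding S)
    (hTS : T ⊆ S) : w.IsDirPathAvoiding T :=
  ⟨h.isDirected, h.nodup, fun n hn hnT => h.not_mem n hn (hTS hnT)⟩

lemma IsDirPathAvoiding.insert {w : Walk G a b} (h : w.IsDirPathAvoiding S)
    (hx : x ∉ w.nodes.dropLast) : w.IsDirPathAvoiding (insert x S) :=
  ⟨h.isDirected, h.nodup, fun n hn hnx =>
    hnx.elim (fun hnx => hx (hnx ▸ hn)) (h.not_mem n hn)⟩

lemma IsDirPathAvoiding.union_anSet {w : Walk G a b}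
    (h : w.IsDirPathAvoiding S) (ha : a ∉ G.anSet C) : w.IsDirPathAvoiding (S ∪ G.anSet C) :=
  ⟨h.isDirected, h.nodup, fun n hn hnS => hnS.elim (h.not_mem n hn) fun hnC =>
    ha (mem_anSet_of_anc (h.isDirected.anc_of_mem (List.dropLast_subset _ hn)) hnC)⟩

lemma exists_eq_append_of_mem_nodes {w : Walk G a b} (hx : x ∈ w.nodes) :
    ∃ (w₁ : Walk G a x) (w₂ : Walk G x b), w = w₁.append w₂ := by
  induction w with
  | nil => obtain rfl := List.mem_singleton.1 hx; exact ⟨nil _, nil _, rfl⟩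
  | cons s w ih =>
    rcases List.mem_cons.1 hx with rfl | hx
    · exact ⟨nil _, cons s w, rfl⟩
    · obtain ⟨w₁, w₂, rfl⟩ := ih hx
      exact ⟨cons s w₁, w₂, rfl⟩

lemma exists_eq_append_cons_of_mem_dropLast {w : Walk G a b}
    (h : ∃ n ∈ w.nodes.dropLast, n ∈ T) :
    ∃ (x y : V) (w₁ : Walk G a x) (s : Step G x y) (w₂ : Walk G y b),
      w = w₁.append (cons s w₂) ∧ x ∈ T ∧ ∀ n ∈ w₂.nodes.dropLast, n ∉ T := by
  induction w with
  | nil => simp at h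
  | cons s w ih =>
    by_cases hw : ∃ n ∈ w.nodes.dropLast, n ∈ T
    · obtain ⟨x, y, w₁, t, w₂, rfl, hx, hw₂⟩ := ih hw
      exact ⟨x, y, cons s w₁, t, w₂, rfl, hx, hw₂⟩
    · push Not at hw
      obtain ⟨n, hn, hnT⟩ := h
      rcases List.mem_cons.1 (dropLast_nodes_cons s w ▸ hn) with rfl | hn
      · exact ⟨_, _, nil _, s, w, rfl, hnT, hw⟩
      · exact absurd hnT (hw n hn)

theorem exists_segment {P Q R : V → Prop} (w : Walk G a b) (hw : w.Nontrivial)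
    (h : ∀ x ∈ w.interior, R x ∨ P x ∨ Q x) :
    ∃ (y z : V) (π : Walk G a y) (μ : Walk G y z) (ρ : Walk G z b),
      w = π.append (μ.append ρ) ∧ μ.Nontrivial ∧ (π.Nontrivial → P y) ∧
        (ρ.Nontrivial → Q z) ∧ ∀ x ∈ μ.interior, R x := by
  induction w with
  | nil => exact hw.elim
  | @cons a m b s w ih =>
    cases w with
    | nil =>
      exact ⟨_, _, nil _, cons s (nil _), nil _, rfl, trivial, False.elim, False.elim,
        by simp [interior_cons]⟩
    | cons t w =>
      rw [interior_cons, dropLast_nodes_eq_cons_interior (nontrivial_cons t w)] at h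
      obtain ⟨y, z, π, μ, ρ, heq, hμ, hπ, hρ, hμR⟩ :=
        ih trivial (fun x hx => h x (List.mem_cons_of_mem _ hx))
      cases π with
      | cons r π =>
        exact ⟨y, z, cons s (cons r π), μ, ρ, by rw [heq]; rfl, hμ, fun _ => hπ trivial, hρ, hμR⟩
      | nil =>
        rcases h m List.mem_cons_self with hR | hP | hQ
        · refine ⟨_, z, nil _, cons s μ, ρ, by rw [heq]; rfl, trivial, False.elim, hρ, ?_⟩
          rw [interior_cons, dropLast_nodes_eq_cons_interior hμ]
          exact List.forall_mem_cons.2 ⟨hR, hμR⟩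
        · exact ⟨m, z, cons s (nil m), μ, ρ, by rw [heq]; rfl, hμ, fun _ => hP, hρ, hμR⟩
        · exact ⟨_, m, nil _, cons s (nil m), cons t w, rfl, trivial, False.elim, fun _ => hQ,
            by simp [interior_cons]⟩

lemma interior_sublist_of_segment (π : Walk G a y) {μ : Walk G y z} (hμ : μ.Nontrivial)
    (ρ : Walk G z b) : μ.interior.Sublist (π.append (μ.append ρ)).interior := by
  rw [interior_append_of_nontrivial_right π (hμ.append_left ρ), interior_append hμ]
  exact (List.sublist_append_left _ _).trans (List.sublist_append_right _ _)

lemma segment_of_allColliders {π : Walk G a y} {μ : Walk G y z} {ρ : Walk G z b}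
    (hμ : μ.Nontrivial) (hc : (π.append (μ.append ρ)).AllColliders)
    (hl : (π.append (μ.append ρ)).lastHead = true) :
    μ.AllColliders ∧ μ.lastHead = true ∧ (π.Nontrivial → μ.firstHead = true) := by
  have hμρ : (μ.append ρ).Nontrivial := hμ.append_left ρ
  rw [lastHead_append_of_nontrivial _ hμρ] at hl
  obtain ⟨hc, hπ⟩ : (μ.append ρ).AllColliders ∧ (π.Nontrivial → μ.firstHead = true) := by
    cases π with
    | nil => exact ⟨hc, False.elim⟩
    | cons s π =>
      obtain ⟨-, -, hf, hc⟩ := (allColliders_append (nontrivial_cons s π) hμρ).1 hc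
      exact ⟨hc, fun _ => firstHead_append_of_nontrivial hμ ρ ▸ hf⟩
  cases ρ with
  | nil => rw [append_nil] at hc hl; exact ⟨hc, hl, hπ⟩
  | cons t ρ =>
    obtain ⟨hcμ, hlμ, -, -⟩ := (allColliders_append hμ (nontrivial_cons t ρ)).1 hc
    exact ⟨hcμ, hlμ, hπ⟩

lemma lastHead_append_of_isDirected {w : Walk G a y} {d : Walk G y b} (hw : w.lastHead = true)
    (hd : d.IsDirected) : (w.append d).lastHead = true := by
  cases d with
  | nil => rwa [append_nil]
  | cons s d => rw [lastHead_append_of_nontrivial _ (nontrivial_cons s d), hd.lastHead trivial]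

structure IsColliderPathIn (A : Set V) (μ : Walk G y z) : Prop where
  allColliders : μ.AllColliders
  lastHead : μ.lastHead = true
  nodup : μ.interior.Nodup
  interior_subset : ∀ x ∈ μ.interior, x ∈ A

lemma IsColliderPathIn.nontrivial {μ : Walk G y z} (hμ : μ.IsColliderPathIn A) :
    μ.Nontrivial :=
  nontrivial_of_lastHead hμ.lastHead

/-- `a ← ⋯ ← y ∼ ⋯ ∼ z → ⋯ → b`, for directed `q` and `p`. -/
def splice (q : Walk G y a) (μ : Walk G y z) (p : Walk G z b) : Walk G a b :=
  q.reverse.append (μ.append p)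

lemma interior_splice (q : Walk G y a) {μ : Walk G y z} (hμ : μ.Nontrivial) (p : Walk G z b) :
    (splice q μ p).interior = q.nodes.dropLast.reverse ++ (μ.interior ++ p.nodes.dropLast) := by
  rw [splice, interior_append_of_nontrivial_right _ (hμ.append_left p), interior_append hμ,
    nodes_reverse, List.tail_reverse]

lemma firstHead_splice_nil {μ : Walk G a z} (hμ : μ.Nontrivial) (p : Walk G z b) :
    (splice (nil a) μ p).firstHead = μ.firstHead :=
  firstHead_append_of_nontrivial hμ p

lemma firstHead_splice_of_nontrivial {q : Walk G y a} (hq : q.IsDirected) (hn : q.Nontrivial)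
    (μ : Walk G y z) (p : Walk G z b) : (splice q μ p).firstHead = true := by
  rw [splice, firstHead_append_of_nontrivial hn.reverse, firstHead_reverse, hq.lastHead hn]

theorem splice_muConn_isPathOrCycle (hC : a ∉ C) {q : Walk G y a}
    (hq : q.IsDirPathAvoiding ({a, b} ∪ G.anSet C)) {μ : Walk G y z}
    (hμ : μ.IsColliderPathIn (G.anSet C \ {a, b})) {p : Walk G z b}
    (hp : p.IsDirPathAvoiding ({a, b} ∪ G.anSet C))
    (hqp : ∀ n ∈ q.nodes.dropLast, n ∉ p.nodes.dropLast) :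
    (splice q μ p).MuConn C ∧ (splice q μ p).IsPathOrCycle := by
  have hq' : ∀ n ∈ q.nodes.dropLast, n ≠ a ∧ n ≠ b ∧ n ∉ G.anSet C := fun n hn => by
    simpa [not_or, and_assoc] using hq.not_mem n hn
  have hp' : ∀ n ∈ p.nodes.dropLast, n ≠ a ∧ n ≠ b ∧ n ∉ G.anSet C := fun n hn => by
    simpa [not_or, and_assoc] using hp.not_mem n hn
  have hμ' : ∀ x ∈ μ.interior, x ∈ G.anSet C ∧ x ≠ a ∧ x ≠ b := fun x hx => by
    simpa [not_or, and_assoc] using hμ.interior_subset x hx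
  have hqC : ∀ n ∈ q.nodes, n ∉ C := by
    intro n hn hnC
    rcases List.mem_append.1 (nodes_eq_dropLast_append q ▸ hn) with hn | hn
    · exact (hq' n hn).2.2 (subset_anSet C hnC)
    · exact hC (List.mem_singleton.1 hn ▸ hnC)
  refine ⟨muConn_iff.2 ⟨?_, ?_⟩, ?_⟩
  · rw [splice, hq.isDirected.openFrom_reverse_append (fun n hn => hqC n (List.mem_of_mem_tail hn)),
      openFrom_append]
    exact ⟨hμ.allColliders.openFrom (hqC y (by rw [nodes_eq_cons_tail]; exact List.mem_cons_self))
      (fun x hx => (hμ' x hx).1),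
      hp.isDirected.openFrom (fun n hn hnC => (hp' n hn).2.2 (subset_anSet C hnC)) _⟩
  · rw [splice, lastHead_append_of_nontrivial _ (hμ.nontrivial.append_left p)]
    exact lastHead_append_of_isDirected hμ.lastHead hp.isDirected
  · rw [IsPathOrCycle, interior_splice q hμ.nontrivial p]
    simp only [List.nodup_append, List.nodup_reverse, List.mem_append, List.mem_reverse, not_or]
    refine ⟨⟨hq.nodup.sublist (List.dropLast_sublist _), ⟨hμ.nodup,
      hp.nodup.sublist (List.dropLast_sublist _), ?_⟩, ?_⟩, ?_, ?_⟩
    · exact fun x hx n hn hxn => (hp' n hn).2.2 (hxn ▸ (hμ' x hx).1)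
    · rintro n hn x (hx | hx) rfl
      exacts [(hq' n hn).2.2 (hμ' n hx).1, hqp n hn hx]
    · exact ⟨fun h => (hq' a h).1 rfl, fun h => (hμ' a h).2.1 rfl, fun h => (hp' a h).1 rfl⟩
    · exact ⟨fun h => (hq' b h).2.1 rfl, fun h => (hμ' b h).2.2 rfl, fun h => (hp' b h).2.1 rfl⟩

theorem exists_muConn_of_meet (hC : a ∉ C) {q : Walk G y a}
    (hq : q.IsDirPathAvoiding ({a, b} ∪ G.anSet C)) {p : Walk G z b}
    (hp : p.IsDirPathAvoiding ({a, b} ∪ G.anSet C))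
    (hqp : ∃ n ∈ p.nodes.dropLast, n ∈ q.nodes.dropLast) :
    ∃ w : Walk G a b, w.MuConn C ∧ w.IsPathOrCycle ∧ w.firstHead = true := by
  obtain ⟨u, m, p₁, s, p₂, rfl, hu, hp₂⟩ :=
    exists_eq_append_cons_of_mem_dropLast (T := {n | n ∈ q.nodes.dropLast}) hqp
  obtain ⟨q₁, q₂, rfl⟩ := exists_eq_append_of_mem_nodes (List.dropLast_subset _ hu)
  have hq₂ := hq.of_append_right
  have hsp : ((cons s (nil m)).append p₂).IsDirPathAvoiding ({a, b} ∪ G.anSet C) :=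
    hp.of_append_right
  have hua : u ≠ a := fun h =>
    hsp.not_mem u (by rw [cons_append, dropLast_nodes_cons]; exact List.mem_cons_self)
      (Or.inl (Or.inl h))
  have hs : (cons s (nil m)).IsColliderPathIn (G.anSet C \ {a, b}) :=
    ⟨trivial, (isDirected_append.1 hsp.isDirected).1.1.headEnd, List.nodup_nil,
      by simp [interior_cons]⟩
  obtain ⟨hw, hwp⟩ := splice_muConn_isPathOrCycle hC hq₂ hs hsp.of_append_right
    fun n hn hn' => hp₂ n hn' (dropLast_nodes_append q₁ q₂ ▸ List.mem_append_right _ hn)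
  exact ⟨_, hw, hwp, firstHead_splice_of_nontrivial hq₂.isDirected (nontrivial_of_ne q₂ hua) _ _⟩

theorem exists_muConn_of_dirPaths (hC : a ∉ C) {q : Walk G y a}
    (hq : q.IsDirPathAvoiding ({a, b} ∪ G.anSet C)) {μ : Walk G y z}
    (hμ : μ.IsColliderPathIn (G.anSet C \ {a, b})) (hμf : μ.firstHead = true) {p : Walk G z b}
    (hp : p.IsDirPathAvoiding ({a, b} ∪ G.anSet C)) :
    ∃ w : Walk G a b, w.MuConn C ∧ w.IsPathOrCycle ∧ w.firstHead = true := by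
  by_cases hqp : ∃ n ∈ p.nodes.dropLast, n ∈ q.nodes.dropLast
  · exact exists_muConn_of_meet hC hq hp hqp
  push Not at hqp
  obtain ⟨hw, hwp⟩ := splice_muConn_isPathOrCycle hC hq hμ hp fun n hn hn' => hqp n hn' hn
  refine ⟨_, hw, hwp, ?_⟩
  cases q with
  | nil => rwa [firstHead_splice_nil hμ.nontrivial]
  | cons s q => exact firstHead_splice_of_nontrivial hq.isDirected trivial _ _

theorem exists_colliderSubpath {P : V → Prop} {ν : Walk G a b} (hnt : ν.Nontrivial)
    (hpc : ν.IsPathOrCycle) (hc : ν.AllColliders) (hl : ν.lastHead = true)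
    (h : ∀ x ∈ ν.interior, x ∈ G.anSet C ∨ P x ∨
      ∃ p : Walk G x b, p.IsDirPathAvoiding ({a, b} ∪ G.anSet C)) :
    ∃ (y z : V) (μ : Walk G y z) (p : Walk G z b), μ.IsColliderPathIn (G.anSet C \ {a, b}) ∧
      p.IsDirPathAvoiding ({a, b} ∪ G.anSet C) ∧
      ((y = a ∧ μ.firstHead = ν.firstHead) ∨ (P y ∧ μ.firstHead = true)) := by
  obtain ⟨y, z, π, μ, ρ, rfl, hμ, hπ, hρ, hμA⟩ := exists_segment ν hnt h
  obtain ⟨hμc, hμl, hμf⟩ := segment_of_allColliders hμ hc hl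
  have hsub := interior_sublist_of_segment π hμ ρ
  have hμ' : μ.IsColliderPathIn (G.anSet C \ {a, b}) :=
    ⟨hμc, hμl, hpc.1.sublist hsub, fun x hx => ⟨hμA x hx, by
      rintro (rfl | rfl)
      exacts [hpc.2.1 (hsub.subset hx), hpc.2.2 (hsub.subset hx)]⟩⟩
  obtain ⟨p, hp⟩ : ∃ p : Walk G z b, p.IsDirPathAvoiding ({a, b} ∪ G.anSet C) := by
    cases ρ with
    | nil => exact ⟨nil _, isDirPathAvoiding_nil _⟩
    | cons t ρ => exact hρ trivial
  refine ⟨y, z, μ, p, hμ', hp, ?_⟩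
  cases π with
  | nil => exact Or.inl ⟨rfl, (firstHead_append_of_nontrivial hμ ρ).symm⟩
  | cons s π => exact Or.inr ⟨hπ trivial, hμf trivial⟩

end Walk

open Walk

theorem exists_isDirPathAvoiding_of_anc {t : V} (h : G.anc x t) (ht : t ∈ T) :
    ∃ s ∈ T, ∃ d : Walk G x s, d.IsDirPathAvoiding T := by
  induction h using Relation.ReflTransGen.head_induction_on with
  | refl => exact ⟨t, ht, nil t, isDirPathAvoiding_nil T⟩
  | @head x m hxm _ ih =>
    by_cases hx : x ∈ T
    · exact ⟨x, hx, nil x, isDirPathAvoiding_nil T⟩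
    obtain ⟨s, hs, d, hd⟩ := ih
    by_cases hxd : x ∈ d.nodes
    · obtain ⟨d₁, d₂, rfl⟩ := exists_eq_append_of_mem_nodes hxd
      exact ⟨s, hs, d₂, hd.of_append_right⟩
    · exact ⟨s, hs, cons (.dirF hxm) d, hd.cons hxm hxd hx⟩

theorem exists_isDirPathAvoiding_of_not_mem_anSet (h : G.anc x a ∨ G.anc x b) (hx : x ∉ G.anSet C) :
    (∃ q : Walk G x a, q.IsDirPathAvoiding ({a, b} ∪ G.anSet C)) ∨
      ∃ p : Walk G x b, p.IsDirPathAvoiding ({a, b} ∪ G.anSet C) := by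
  obtain ⟨t, ht, hxt⟩ : ∃ t ∈ ({a, b} : Set V), G.anc x t :=
    h.elim (fun h => ⟨a, Or.inl rfl, h⟩) (fun h => ⟨b, Or.inr rfl, h⟩)
  obtain ⟨s, hs, d, hd⟩ := exists_isDirPathAvoiding_of_anc hxt ht
  rcases hs with rfl | rfl
  exacts [Or.inl ⟨d, hd.union_anSet hx⟩, Or.inr ⟨d, hd.union_anSet hx⟩]

theorem exists_isDirPathAvoiding_right_of_not_mem_anSet (hxb : G.anc x b) (hx : x ∉ G.anSet C)
    (hab : ¬∃ d : Walk G a b, d.Nontrivial ∧ d.IsDirPathAvoiding C) :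
    ∃ p : Walk G x b, p.IsDirPathAvoiding ({a, b} ∪ G.anSet C) := by
  obtain ⟨s, hs, d, hd⟩ := exists_isDirPathAvoiding_of_anc hxb (Set.mem_singleton b)
  rw [Set.mem_singleton_iff] at hs
  subst s
  replace hd := hd.union_anSet hx
  by_cases ha : a ∈ d.nodes.dropLast
  · obtain ⟨d₁, d₂, rfl⟩ := exists_eq_append_of_mem_nodes (List.dropLast_subset _ ha)
    have hab' : a ≠ b := fun h => hd.not_mem a ha (Or.inl h)
    exact (hab ⟨d₂, nontrivial_of_ne d₂ hab',
      hd.of_append_right.mono ((subset_anSet C).trans Set.subset_union_right)⟩).elim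
  · exact ⟨d, Set.insert_union ▸ hd.insert ha⟩

lemma IsInducingPath.isPathOrCycle {ν : Walk G a b} (hν : G.IsInducingPath ν) :
    ν.IsPathOrCycle :=
  hν.2.1.elim isPathOrCycle_of_nodup fun ⟨rfl, h⟩ => isPathOrCycle_of_nodup_dropLast h

theorem exists_muConn_of_isInducingPath {ν : Walk G a b} (hν : G.IsInducingPath ν)
    (hC : a ∉ C) : ∃ w : Walk G a b, w.MuConn C ∧ w.IsPathOrCycle ∧
      (w.firstHead = ν.firstHead ∨ w.firstHead = true) := by
  have hpc := hν.isPathOrCycle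
  obtain ⟨hnt, -, hl, hc, hanc⟩ := hν
  obtain ⟨y, z, μ, p, hμ, hp, ⟨rfl, hμf⟩ | ⟨⟨q, hq⟩, hμf⟩⟩ :=
    exists_colliderSubpath (C := C) hnt hpc hc hl fun x hx => (em _).imp_right fun hxC =>
      exists_isDirPathAvoiding_of_not_mem_anSet (hanc x (mem_nodes_of_mem_interior hx)) hxC
  · obtain ⟨hw, hwp⟩ := splice_muConn_isPathOrCycle hC (isDirPathAvoiding_nil _) hμ hp (by simp)
    exact ⟨_, hw, hwp, Or.inl ((firstHead_splice_nil hμ.nontrivial p).trans hμf)⟩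
  · obtain ⟨w, hw, hwp, hwf⟩ := exists_muConn_of_dirPaths hC hq hμ hμf hp
    exact ⟨w, hw, hwp, Or.inr hwf⟩

theorem exists_muConn_of_isDirectedIP {ν : Walk G a b} (hν : G.IsDirectedIP ν) (hC : a ∉ C) :
    ∃ w : Walk G a b, w.MuConn C ∧ w.IsPathOrCycle ∧ w.firstHead = ν.firstHead := by
  have hpc := hν.1.isPathOrCycle
  obtain ⟨⟨hnt, -, hl, hc, -⟩, huni, hint⟩ := hν
  by_cases hab : ∃ d : Walk G a b, d.Nontrivial ∧ d.IsDirPathAvoiding C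
  · obtain ⟨d, hdn, hd⟩ := hab
    exact ⟨d, hd.isDirected.muConn hdn hd.not_mem, isPathOrCycle_of_nodup hd.nodup,
      hd.isDirected.firstHead.trans huni.firstHead.symm⟩
  obtain ⟨y, z, μ, p, hμ, hp, ⟨rfl, hμf⟩ | ⟨hP, -⟩⟩ :=
    exists_colliderSubpath (C := C) (P := fun _ => False) hnt hpc hc hl fun x hx =>
      (em _).imp_right fun hxC =>
        Or.inr (exists_isDirPathAvoiding_right_of_not_mem_anSet (hint x hx) hxC hab)
  · obtain ⟨hw, hwp⟩ := splice_muConn_isPathOrCycle hC (isDirPathAvoiding_nil _) hμ hp (by simp)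
    exact ⟨_, hw, hwp, (firstHead_splice_nil hμ.nontrivial p).trans hμf⟩
  · exact hP.elim

end DMG

theorem stmt7_general {V : Type u} (G : DMG V) (a b : V)
    (ν : DMG.Walk G a b) (hν : G.IsInducingPath ν) (C : Set V) (hC : a ∉ C) :
    ∃ w : DMG.Walk G a b, w.MuConn C ∧
      (a ≠ b → w.nodes.Nodup) ∧
      (a = b → w.nodes.dropLast.Nodup) ∧
      ((G.IsBidirectedIP ν ∨ G.IsDirectedIP ν) →
        w.firstHead = ν.firstHead ∧ w.lastHead = ν.lastHead) := by
  obtain ⟨w, hw, hwp, hwf⟩ : ∃ w : DMG.Walk G a b, w.MuConn C ∧ w.IsPathOrCycle ∧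
      (G.IsBidirectedIP ν ∨ G.IsDirectedIP ν → w.firstHead = ν.firstHead) := by
    by_cases hdir : G.IsDirectedIP ν
    · obtain ⟨w, hw, hwp, hwf⟩ := DMG.exists_muConn_of_isDirectedIP hdir hC
      exact ⟨w, hw, hwp, fun _ => hwf⟩
    · obtain ⟨w, hw, hwp, hwf⟩ := DMG.exists_muConn_of_isInducingPath hν hC
      refine ⟨w, hw, hwp, fun h => ?_⟩
      have hνf := (h.resolve_right hdir).2.firstHead hν.1
      exact hwf.elim id (·.trans hνf.symm)
  have hwl := (DMG.Walk.muConn_iff.1 hw).2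
  have hwn := DMG.Walk.nontrivial_of_lastHead hwl
  exact ⟨w, hw, hwp.nodup hwn, fun _ => hwp.nodup_dropLast hwn,
    fun h => ⟨hwf h, hwl.trans hν.2.2.1.symm⟩⟩

/-- Proposition 7: if `ν` is an inducing path from `a` to
`b`, then for every `C ⊆ V ∖ {a}` there is a μ-connecting walk from `a` to `b`
given `C` which is a path if `a ≠ b` and a cycle if `a = b`; moreover, if `ν`
is bidirected or directed, it can be chosen endpoint-identical to `ν`. -/
theorem stmt7 {V : Type u} [Fintype V] (G : DMG V) (a b : V)
    (ν : DMG.Walk G a b) (hν : G.IsInducingPath ν) (C : Set V) (hC : a ∉ C) :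
    ∃ w : DMG.Walk G a b, w.MuConn C ∧
      (a ≠ b → w.nodes.Nodup) ∧
      (a = b → w.nodes.dropLast.Nodup) ∧
      ((G.IsBidirectedIP ν ∨ G.IsDirectedIP ν) →
        w.firstHead = ν.firstHead ∧ w.lastHead = ν.lastHead) :=
  stmt7_general G a b ν hν C hC
end

section
/- Let G = (V,E) be a directed mixed graph and α, β ∈ V. If there exists an inducing path from α to β in G, then for every C ⊆ V∖{α}, β is not μ-separated from α given C in G; that is, α ∈ u(β, I(G)). -/
/-!
Directed mixed graphs (DMGs) with μ-separation, following
Mogensen & Hansen, "Markov equivalence of marginalized local independence graphs".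
-/

universe u

namespace DMG

namespace Walk

variable {V : Type u} {G : DMG V}

/-- Auxiliary "last head" function: `lastH h w` is the mark at the final node
of `w`, where `h` is the mark carried in from before (returned if `w` is trivial). -/
def lastH : ∀ {a b : V}, Bool → Walk G a b → Bool
  | _, _, h, .nil _ => h
  | _, _, _, .cons s w => lastH s.headEnd w

lemma lastHead_cons_eq : ∀ {a b c : V} (s : Step G a b) (w : Walk G b c),
    (Walk.cons s w).lastHead = lastH s.headEnd w
  | _, _, _, _, .nil _ => rfl
  | _, _, _, _, .cons t w => lastHead_cons_eq t w

/-- Append a single step at the end of a walk. -/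
def snoc : ∀ {a x y : V}, Walk G a x → Step G x y → Walk G a y
  | _, _, _, .nil _, s => .cons s (.nil _)
  | _, _, _, .cons t p, s => .cons t (snoc p s)

lemma lastH_snoc : ∀ {a x y : V} (h : Bool) (P : Walk G a x) (s : Step G x y),
    lastH h (snoc P s) = s.headEnd
  | _, _, _, _, .nil _, _ => rfl
  | _, _, _, _, .cons t p, s => lastH_snoc t.headEnd p s

lemma lastHead_snoc {a x y : V} (P : Walk G a x) (s : Step G x y) :
    (snoc P s).lastHead = s.headEnd := by
  cases P with
  | nil => rfl
  | cons t p =>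
      show (Walk.cons t (snoc p s)).lastHead = s.headEnd
      rw [lastHead_cons_eq, lastH_snoc]

lemma nontrivial_snoc : ∀ {a x y : V} (P : Walk G a x) (s : Step G x y),
    (snoc P s).Nontrivial
  | _, _, _, .nil _, _ => trivial
  | _, _, _, .cons _ _, _ => trivial

lemma openFrom_snoc (C Anc : Set V) :
    ∀ {x0 x y : V} (h : Bool) (p : Walk G x0 x) (s : Step G x y),
    Walk.openFrom C Anc h p →
    (if lastH h p && s.headStart then x ∈ Anc else x ∉ C) →
    Walk.openFrom C Anc h (snoc p s)
  | _, _, _, h, .nil _, s, _, hc => ⟨hc, trivial⟩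
  | _, _, _, h, .cons t p, s, hop, hc =>
      ⟨hop.1, openFrom_snoc C Anc t.headEnd p s hop.2 hc⟩

/-- A walk is "good" as a prefix of a μ-connecting walk: the start node is not
in `C` and all internal-node conditions hold (vacuously true for trivial walks). -/
def good (C Anc : Set V) : ∀ {a x : V}, Walk G a x → Prop
  | _, _, .nil _ => True
  | a, _, .cons s p => a ∉ C ∧ Walk.openFrom C Anc s.headEnd p

lemma good_snoc {C Anc : Set V} {a x y : V} (P : Walk G a x) (s : Step G x y)
    (hg : good C Anc P)
    (hc : if P.lastHead && s.headStart then x ∈ Anc else x ∉ C) :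
    good C Anc (snoc P s) := by
  cases P with
  | nil =>
      refine ⟨?_, trivial⟩
      simpa [Walk.lastHead] using hc
  | cons t p =>
      refine ⟨hg.1, ?_⟩
      rw [lastHead_cons_eq] at hc
      exact openFrom_snoc C Anc t.headEnd p s hg.2 hc

lemma muConn_of {C : Set V} {a b : V} :
    ∀ (P : Walk G a b), P.Nontrivial → good C (G.anSet C) P → P.lastHead = true →
      P.MuConn C
  | .nil _, hn, _, _ => absurd hn (by simp [Walk.Nontrivial])
  | .cons s p, _, hg, hl => ⟨hg.1, hg.2, hl⟩

end Walk

variable {V : Type u} {G : DMG V}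

lemma mem_anSet_of_mem {C : Set V} {c : V} (hc : c ∈ C) : c ∈ G.anSet C :=
  ⟨c, hc, Relation.ReflTransGen.refl⟩

lemma anSet_dir {C : Set V} {x z : V} (d : G.dir x z) (h : z ∈ G.anSet C) :
    x ∈ G.anSet C := by
  obtain ⟨c, hc, p⟩ := h
  exact ⟨c, hc, Relation.ReflTransGen.head d p⟩

open Walk in
lemma reroute {C : Set V} {a : V} :
    ∀ {x : V}, Relation.ReflTransGen G.dir x a → x ∉ G.anSet C →
    ∃ P : Walk G a x, good C (G.anSet C) P ∧ P.lastHead = false := by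
  intro x hp
  induction hp using Relation.ReflTransGen.head_induction_on with
  | refl => exact fun _ => ⟨.nil a, trivial, rfl⟩
  | head d p ih =>
      intro hx
      obtain ⟨P, hg, hl⟩ := ih (fun hz => hx (anSet_dir d hz))
      refine ⟨snoc P (.dirB d), good_snoc P _ hg ?_, by rw [lastHead_snoc]; rfl⟩
      rw [hl]
      simp only [Bool.false_and, if_neg Bool.false_ne_true]
      exact fun hz => hx (anSet_dir d (mem_anSet_of_mem hz))

open Walk in
lemma finish {C : Set V} {a b : V} :
    ∀ {x : V}, Relation.ReflTransGen G.dir x b → x ∉ G.anSet C →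
    ∀ P : Walk G a x, good C (G.anSet C) P → P.Nontrivial → P.lastHead = true →
    ∃ W : Walk G a b, W.MuConn C := by
  intro x hp
  induction hp using Relation.ReflTransGen.head_induction_on with
  | refl => exact fun _ P hg hn hl => ⟨P, muConn_of P hn hg hl⟩
  | head d p ih =>
      intro hx P hg hn hl
      refine ih (fun hz => hx (anSet_dir d hz)) (snoc P (.dirF d))
        (good_snoc P _ hg ?_) (nontrivial_snoc P _) (by rw [lastHead_snoc]; rfl)
      rw [hl]
      simp only [Step.headStart, Bool.and_false, if_neg Bool.false_ne_true]
      exact fun hxC => hx (mem_anSet_of_mem hxC)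

open Walk in
lemma mainlem {C : Set V} {a : V} :
    ∀ {x b : V} (w : Walk G x b), Walk.allCollFrom true w → lastH true w = true →
      (∀ n ∈ w.nodes, G.anc n a ∨ G.anc n b) →
      ∀ P : Walk G a x, good C (G.anSet C) P → P.Nontrivial → P.lastHead = true →
      ∃ W : Walk G a b, W.MuConn C
  | _, _, .nil _, _, _, _, P, hg, hn, hl => ⟨P, muConn_of P hn hg hl⟩
  | x, b, .cons s w, hcoll, hlast, hanc, P, hg, hn, hl => by
      obtain ⟨hsS, hcoll'⟩ := hcoll
      have hsS' : s.headStart = true := by simpa using hsS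
      have hsE : s.headEnd = true := by
        cases w with
        | nil => simpa [lastH] using hlast
        | cons t w' => exact ((Bool.and_eq_true _ _).mp hcoll'.1).1
      rw [hsE] at hcoll'
      have hlast0 : lastH s.headEnd w = true := hlast
      rw [hsE] at hlast0
      have hanc' : ∀ n ∈ w.nodes, G.anc n a ∨ G.anc n b := fun n hn' =>
        hanc n (by simp [Walk.nodes, hn'])
      by_cases hxA : x ∈ G.anSet C
      · refine mainlem w hcoll' hlast0 hanc' (snoc P s) (good_snoc P s hg ?_)
          (nontrivial_snoc P s) (by rw [lastHead_snoc, hsE])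
        rw [hl, hsS']
        simpa using hxA
      · rcases hanc x (by simp [Walk.nodes]) with hxa | hxb
        · obtain ⟨P0, hg0, hl0⟩ := reroute hxa hxA
          refine mainlem w hcoll' hlast0 hanc' (snoc P0 s) (good_snoc P0 s hg0 ?_)
            (nontrivial_snoc P0 s) (by rw [lastHead_snoc, hsE])
          rw [hl0]
          simp only [Bool.false_and, if_neg Bool.false_ne_true]
          exact fun hxC => hxA (mem_anSet_of_mem hxC)
        · exact finish hxb hxA P hg hn hl

end DMG

/-- Corollary 1: if there is an inducing path from `a` to
`b` in `G`, then for every `C ⊆ V ∖ {a}`, `b` is not μ-separated from `a`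
given `C`; that is, `a ∈ u(b, I(G))`. -/
theorem stmt8 {V : Type u} [Fintype V] (G : DMG V) (a b : V)
    (h : ∃ w : DMG.Walk G a b, G.IsInducingPath w) :
    (∀ C : Set V, a ∉ C → ¬ DMG.muSep G {a} {b} C) ∧ G.inU a b := by
  obtain ⟨w, hnt, _, hlast, hcoll, hanc⟩ := h
  have key : ∀ C : Set V, a ∉ C → ∃ W : DMG.Walk G a b, W.MuConn C := by
    intro C hC
    cases w with
    | nil => exact absurd hnt (by simp [DMG.Walk.Nontrivial])
    | cons s w0 =>
        have hcoll0 : DMG.Walk.allCollFrom s.headEnd w0 := hcoll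
        have hsE : s.headEnd = true := by
          cases w0 with
          | nil => simpa [DMG.Walk.lastHead] using hlast
          | cons t w1 => exact (Bool.and_eq_true _ _).mp hcoll0.1 |>.1
        rw [hsE] at hcoll0
        have hl0 : DMG.Walk.lastH s.headEnd w0 = true := by
          rw [← DMG.Walk.lastHead_cons_eq s w0]; exact hlast
        rw [hsE] at hl0
        have ha0 : ∀ n ∈ w0.nodes, G.anc n a ∨ G.anc n b := fun n hn =>
          hanc n (by simp [DMG.Walk.nodes, hn])
        exact DMG.mainlem w0 hcoll0 hl0 ha0 (.cons s (.nil _)) ⟨hC, trivial⟩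
          trivial hsE
  constructor
  · intro C hC hsep
    obtain ⟨W, hW⟩ := key C hC
    exact hsep rfl rfl W hW
  · rintro ⟨C, hC, hsep⟩
    obtain ⟨W, hW⟩ := key C hC
    exact hsep rfl rfl W hW
end
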